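/- arXiv:2005.13771 — 4 statements merged into one kernel-verified Lean document; each statement's English description precedes it below -/
import Mathlib

section
/- (Characterization of the hard-thresholding operator.) Let m ≥ 1, s ∈ {1,…,m}, and α ∈ ℝ^m. A vector u ∈ ℝ^m satisfies u ∈ ℙ_s(α) if and only if there exists an index set T ⊆ {1,…,m} with |T| = s and |α_i| ≥ |α_j| for all i ∈ T and j ∉ T, such that u_i = α_i for all i ∈ T and u_j = 0 for all j ∉ T. -/
noncomputable section

open Finset Matrix

/-- Euclidean (ℓ₂) norm of a vector in ℝ^m. -/
def enorm {m : ℕ} (v : Fin m → ℝ) : ℝ := Real.sqrt (∑ i, (v i) ^ 2)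

/-- The zero "norm": number of nonzero entries. -/
def zeroNorm {m : ℕ} (α : Fin m → ℝ) : ℕ := {i | α i ≠ 0}.ncard

/-- The soft-margin loss ℓ_{cC}. -/
def softLoss (c C t : ℝ) : ℝ := if 0 ≤ t then C * t ^ 2 / 2 else c * t ^ 2 / 2

/-- The dual penalty h_{cC}. -/
def hLoss (c C t : ℝ) : ℝ := if 0 ≤ t then t ^ 2 / (2 * C) else t ^ 2 / (2 * c)

/-- The matrix Q whose j-th column is y_j · x_j. -/
def Qmat {m n : ℕ} (x : Fin m → Fin n → ℝ) (y : Fin m → ℝ) : Matrix (Fin n) (Fin m) ℝ :=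
  Matrix.of fun i j => y j * x j i

/-- The diagonal matrix E(α). -/
def Emat {m : ℕ} (c C : ℝ) (α : Fin m → ℝ) : Matrix (Fin m) (Fin m) ℝ :=
  Matrix.diagonal fun i => if 0 ≤ α i then 1 / C else 1 / c

/-- The Hessian H(α) = QᵀQ + E(α). -/
def Hmat {m n : ℕ} (c C : ℝ) (x : Fin m → Fin n → ℝ) (y : Fin m → ℝ) (α : Fin m → ℝ) :
    Matrix (Fin m) (Fin m) ℝ :=
  (Qmat x y)ᵀ * Qmat x y + Emat c C α

/-- The dual objective D(α) = (1/2)‖Qα‖² + (1/2)⟨E(α)α, α⟩ − ⟨1, α⟩. -/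
def Dfun {m n : ℕ} (c C : ℝ) (x : Fin m → Fin n → ℝ) (y : Fin m → ℝ) (α : Fin m → ℝ) : ℝ :=
  (1 / 2) * ∑ i, ((Qmat x y).mulVec α i) ^ 2
    + (1 / 2) * ∑ i, ((Emat c C α).mulVec α i) * α i
    - ∑ i, α i

/-- g(α, b) = H(α)α − 1 + b·y. -/
def gfun {m n : ℕ} (c C : ℝ) (x : Fin m → Fin n → ℝ) (y : Fin m → ℝ)
    (α : Fin m → ℝ) (b : ℝ) : Fin m → ℝ :=
  (Hmat c C x y α).mulVec α - (fun _ => (1 : ℝ)) + b • y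

/-- The hard-thresholding operator ℙ_s(α): minimizers of ‖u − α‖ over ‖u‖₀ ≤ s. -/
def hardThr {m : ℕ} (s : ℕ) (α : Fin m → ℝ) : Set (Fin m → ℝ) :=
  {u | zeroNorm u ≤ s ∧ ∀ v : Fin m → ℝ, zeroNorm v ≤ s → _root_.enorm (u - α) ≤ _root_.enorm (v - α)}

/-- Feasibility for the sparsity constrained problem (SSVM). -/
def feasible {m : ℕ} (y : Fin m → ℝ) (s : ℕ) (α : Fin m → ℝ) : Prop :=
  ∑ i, α i * y i = 0 ∧ zeroNorm α ≤ s

/-- (α, b) is an η-stationary point of (SSVM). -/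
def etaStat {m n : ℕ} (c C : ℝ) (x : Fin m → Fin n → ℝ) (y : Fin m → ℝ) (s : ℕ) (η : ℝ)
    (α : Fin m → ℝ) (b : ℝ) : Prop :=
  α ∈ hardThr s (α - η • gfun c C x y α b) ∧ ∑ i, α i * y i = 0

/-- The family T_s(α) of index sets of s largest entries in magnitude. -/
def Tsets {m : ℕ} (s : ℕ) (α : Fin m → ℝ) : Set (Finset (Fin m)) :=
  {T | T.card = s ∧ ∀ i ∈ T, ∀ j ∉ T, |α j| ≤ |α i|}

/-- The s-th largest entry of (|α₁|, …, |α_m|). -/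
def sthLargest {m : ℕ} (s : ℕ) (α : Fin m → ℝ) : ℝ :=
  sSup {t : ℝ | s ≤ {i | t ≤ |α i|}.ncard}

/-- Euclidean distance between pairs (α, b) and (α', b') in ℝ^m × ℝ. -/
def pairDist {m : ℕ} (α : Fin m → ℝ) (b : ℝ) (α' : Fin m → ℝ) (b' : ℝ) : ℝ :=
  Real.sqrt ((∑ i, (α i - α' i) ^ 2) + (b - b') ^ 2)

/-- Spectral (operator) norm of a matrix w.r.t. Euclidean norms. -/
def specNorm {m n : ℕ} (Q : Matrix (Fin n) (Fin m) ℝ) : ℝ :=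
  ‖LinearMap.toContinuousLinearMap (Matrix.toEuclideanLin Q)‖

/-!
A vector supported on `S` is at squared distance at least `∑ j ∉ S, α j ^ 2` from `α`, with
equality exactly when it agrees with `α` on `S`. Hence the best `s`-sparse approximations of `α`
are its restrictions to the `s`-sets `S` maximising `∑ i ∈ S, α i ^ 2`, and an exchange argument
shows that these are exactly the sets of `s` entries of largest modulus.
-/

open Finset

section TopSets

variable {ι M : Type*} [AddCommMonoid M] [PartialOrder M] {f : ι → M} {s t : Finset ι}

theorem Finset.sum_le_sum_of_card_eq_of_forall_le [IsOrderedAddMonoid M] (hcard : #s = #t)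
    (h : ∀ i ∈ s, ∀ j ∈ t, f i ≤ f j) : ∑ i ∈ s, f i ≤ ∑ j ∈ t, f j := by
  let e := equivOfCardEq hcard
  calc ∑ i ∈ s, f i = ∑ i : s, f i := (sum_coe_sort s f).symm
    _ ≤ ∑ i : s, f (e i) := sum_le_sum fun i _ => h i i.2 (e i) (e i).2
    _ = ∑ j ∈ t, f j := (e.sum_comp fun j : t => f j).trans (sum_coe_sort t f)

variable [DecidableEq ι]

theorem Finset.sum_le_sum_of_forall_notMem_le [IsOrderedAddMonoid M]
    (ht : ∀ i ∈ t, ∀ j ∉ t, f j ≤ f i) (hcard : #s = #t) : ∑ i ∈ s, f i ≤ ∑ i ∈ t, f i := by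
  rw [← sum_inter_add_sum_sdiff s t, ← sum_inter_add_sum_sdiff t s, inter_comm]
  refine add_le_add_right (sum_le_sum_of_card_eq_of_forall_le
    (card_sdiff_eq_card_sdiff_iff.mpr hcard) fun j hj i hi => ?_) _
  exact ht i (mem_sdiff.mp hi).1 j (mem_sdiff.mp hj).2

theorem Finset.forall_notMem_le_of_forall_sum_le [IsOrderedCancelAddMonoid M]
    (hmax : ∀ s : Finset ι, #s = #t → ∑ i ∈ s, f i ≤ ∑ i ∈ t, f i) :
    ∀ i ∈ t, ∀ j ∉ t, f j ≤ f i := by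
  intro i hi j hj
  have hj' : j ∉ t.erase i := fun h => hj (mem_of_mem_erase h)
  have hswap := hmax (insert j (t.erase i)) (by
    rw [card_insert_of_notMem hj', card_erase_add_one hi])
  rw [sum_insert hj', ← add_sum_erase t f hi] at hswap
  exact le_of_add_le_add_right hswap

theorem Finset.sum_compl_le_sum_compl_iff {G : Type*} [Fintype ι] [AddCommGroup G]
    [PartialOrder G] [IsOrderedAddMonoid G] (f : ι → G) (s t : Finset ι) :
    ∑ i ∈ sᶜ, f i ≤ ∑ i ∈ tᶜ, f i ↔ ∑ i ∈ t, f i ≤ ∑ i ∈ s, f i := by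
  rw [eq_sub_of_add_eq (sum_compl_add_sum s f), eq_sub_of_add_eq (sum_compl_add_sum t f),
    sub_le_sub_iff_left]

end TopSets

section SquaredDistance

variable {ι : Type*} [Fintype ι] [DecidableEq ι] {v α : ι → ℝ} {S : Finset ι}

theorem sum_sq_sub_eq (hv : ∀ j ∉ S, v j = 0) :
    ∑ i, (v i - α i) ^ 2 = ∑ i ∈ S, (v i - α i) ^ 2 + ∑ j ∈ Sᶜ, α j ^ 2 := by
  rw [← sum_add_sum_compl S]
  congr 1
  exact sum_congr rfl fun j hj => by rw [hv j (mem_compl.mp hj)]; ring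

theorem sum_sq_sub_eq_of_eqOn (hvS : ∀ i ∈ S, v i = α i) (hv : ∀ j ∉ S, v j = 0) :
    ∑ i, (v i - α i) ^ 2 = ∑ j ∈ Sᶜ, α j ^ 2 := by
  rw [sum_sq_sub_eq hv, sum_eq_zero fun i hi => by rw [hvS i hi, sub_self, sq, zero_mul],
    zero_add]

end SquaredDistance

variable {m : ℕ}

theorem enorm_sub_le_enorm_sub_iff (u v α : Fin m → ℝ) :
    _root_.enorm (u - α) ≤ _root_.enorm (v - α) ↔
      ∑ i, (u i - α i) ^ 2 ≤ ∑ i, (v i - α i) ^ 2 :=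
  Real.sqrt_le_sqrt_iff (by positivity)

theorem zeroNorm_le_card {v : Fin m → ℝ} {S : Finset (Fin m)} (hv : ∀ j ∉ S, v j = 0) :
    zeroNorm v ≤ #S := by
  rw [← Set.ncard_coe_finset]
  exact Set.ncard_le_ncard (fun i hi => by_contra fun hiS => hi (hv i hiS))

theorem exists_card_eq_of_zeroNorm_le {v : Fin m → ℝ} {s : ℕ} (hv : zeroNorm v ≤ s)
    (hs : s ≤ m) : ∃ S : Finset (Fin m), #S = s ∧ ∀ j ∉ S, v j = 0 := by
  have hsupp : #{i | v i ≠ 0} ≤ s := by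
    rw [← Set.ncard_coe_finset]
    simpa [zeroNorm] using hv
  obtain ⟨S, hsub, -, hS⟩ := exists_subsuperset_card_eq (subset_univ _) hsupp (by simpa)
  exact ⟨S, hS, fun j hj => by_contra fun hvj => hj (hsub (by simpa))⟩

theorem stmt_6_general {m : ℕ} (s : ℕ) (hs2 : s ≤ m)
    (α : Fin m → ℝ) (u : Fin m → ℝ) :
    u ∈ hardThr s α ↔
      ∃ T : Finset (Fin m), T.card = s ∧ (∀ i ∈ T, ∀ j ∉ T, |α j| ≤ |α i|) ∧
        (∀ i ∈ T, u i = α i) ∧ (∀ j ∉ T, u j = 0) := by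
  constructor
  · rintro ⟨hu, hmin⟩
    obtain ⟨S, hS, huS⟩ := exists_card_eq_of_zeroNorm_le hu hs2
    have hcompare : ∀ T : Finset (Fin m), #T = s →
        ∑ i ∈ S, (u i - α i) ^ 2 + ∑ j ∈ Sᶜ, α j ^ 2 ≤ ∑ j ∈ Tᶜ, α j ^ 2 := by
      intro T hT
      have hTα := hmin (Set.indicator T α)
        (hT ▸ zeroNorm_le_card fun j hj => Set.indicator_of_notMem hj α)
      rwa [enorm_sub_le_enorm_sub_iff, sum_sq_sub_eq huS, sum_sq_sub_eq_of_eqOn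
        (fun i hi => Set.indicator_of_mem hi α) fun j hj => Set.indicator_of_notMem hj α] at hTα
    have hres_nonneg : 0 ≤ ∑ i ∈ S, (u i - α i) ^ 2 := sum_nonneg fun i _ => sq_nonneg _
    refine ⟨S, hS, fun i hi j hj => ?_, fun i hi => ?_, huS⟩
    · refine sq_le_sq.mp <|
        forall_notMem_le_of_forall_sum_le (f := fun i => α i ^ 2) (fun T hT => ?_) i hi j hj
      exact (sum_compl_le_sum_compl_iff _ S T).mp (by linarith [hcompare T (hT.trans hS)])
    · have hzero : ∑ i ∈ S, (u i - α i) ^ 2 = 0 := by linarith [hcompare S hS]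
      have hsq := (sum_eq_zero_iff_of_nonneg fun i _ => sq_nonneg (u i - α i)).mp hzero i hi
      exact sub_eq_zero.mp (pow_eq_zero_iff two_ne_zero |>.mp hsq)
  · rintro ⟨T, hT, htop, huT, hu0⟩
    refine ⟨hT ▸ zeroNorm_le_card hu0, fun v hv => ?_⟩
    obtain ⟨S, hS, hvS⟩ := exists_card_eq_of_zeroNorm_le hv hs2
    rw [enorm_sub_le_enorm_sub_iff, sum_sq_sub_eq_of_eqOn huT hu0, sum_sq_sub_eq hvS]
    have hS_le_T := sum_le_sum_of_forall_notMem_le (f := fun i => α i ^ 2)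
      (fun i hi j hj => sq_le_sq.mpr (htop i hi j hj)) (hS.trans hT.symm)
    linarith [(sum_compl_le_sum_compl_iff _ T S).mpr hS_le_T,
      sum_nonneg fun i (_ : i ∈ S) => sq_nonneg (v i - α i)]

/-- characterization of the hard-thresholding operator. -/
theorem stmt_6 {m : ℕ} (hm : 1 ≤ m) (s : ℕ) (hs1 : 1 ≤ s) (hs2 : s ≤ m)
    (α : Fin m → ℝ) (u : Fin m → ℝ) :
    u ∈ hardThr s α ↔
      ∃ T : Finset (Fin m), T.card = s ∧ (∀ i ∈ T, ∀ j ∉ T, |α j| ≤ |α i|) ∧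
        (∀ i ∈ T, u i = α i) ∧ (∀ j ∉ T, u j = 0) :=
  stmt_6_general s hs2 α u
end
end

section
/- (Theorem 4 a.) If (α*, b*) is an η-stationary point of (SSVM) for some η > 0, then α* is a local minimizer of (SSVM); that is, α* is feasible and there exists ε > 0 such that D(α*) ≤ D(α) for every feasible α with ‖α − α*‖ < ε. -/
noncomputable section

open Finset Matrix

/-!
`D` is convex (its diagonal part is a `C¹` convex piecewise quadratic), and
on the hyperplane `⟨α, y⟩ = 0` the vector `g(α*, b*)` is a gradient of `D` at `α*`, since the
term `b*·y` is orthogonal to it. So it suffices that `⟨g(α*, b*), α - α*⟩ = 0` for feasible `α`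
near `α*`. Comparing `α*` with the `s`-sparse vector obtained by replacing one entry of `α*` by
that of `α* - η g`, η-stationarity forces `gᵢ = 0` wherever `α*ᵢ ≠ 0`, and everywhere if
`‖α*‖₀ < s`. If `‖α*‖₀ = s`, every `s`-sparse `α` close enough to `α*` has the same support. -/

open Filter Topology

section

variable {m n : ℕ}

lemma abs_apply_le_enorm (v : Fin m → ℝ) (i : Fin m) : |v i| ≤ _root_.enorm v := by
  rw [← Real.sqrt_sq_eq_abs]
  exact Real.sqrt_le_sqrt (Finset.single_le_sum (fun j _ => sq_nonneg (v j)) (mem_univ i))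

lemma norm_le_enorm (v : Fin m → ℝ) : ‖v‖ ≤ _root_.enorm v :=
  (pi_norm_le_iff_of_nonneg (Real.sqrt_nonneg _)).2 fun i => abs_apply_le_enorm v i

lemma exists_pos_support_subset_of_enorm_sub_lt (a : Fin m → ℝ) :
    ∃ ε > 0, ∀ b : Fin m → ℝ, _root_.enorm (b - a) < ε →
      Function.support a ⊆ Function.support b := by
  have hnear : ∀ᶠ b in 𝓝 a, ∀ i, a i ≠ 0 → b i ≠ 0 := by
    refine eventually_all.2 fun i => ?_
    by_cases hi : a i = 0
    · exact .of_forall fun _ h => absurd hi h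
    · exact ((continuous_apply i).continuousAt.eventually_ne hi).mono fun _ hb _ => hb
  obtain ⟨ε, hε, hball⟩ := Metric.eventually_nhds_iff.1 hnear
  exact ⟨ε, hε, fun b hb => hball (by rw [dist_eq_norm]; exact (norm_le_enorm _).trans_lt hb)⟩

lemma zeroNorm_update_le_of_ne_zero {u : Fin m → ℝ} {i : Fin m} (hi : u i ≠ 0) (a : ℝ) :
    zeroNorm (Function.update u i a) ≤ zeroNorm u := by
  refine Set.ncard_le_ncard (fun j hj => ?_) (Set.toFinite _)
  rcases eq_or_ne j i with rfl | hne
  · exact hi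
  · simpa [Function.update_of_ne hne] using hj

lemma zeroNorm_update_le_succ (u : Fin m → ℝ) (i : Fin m) (a : ℝ) :
    zeroNorm (Function.update u i a) ≤ zeroNorm u + 1 := by
  refine (Set.ncard_le_ncard (t := insert i {j | u j ≠ 0}) (fun j hj => ?_)
    (Set.toFinite _)).trans (Set.ncard_insert_le _ _)
  rcases eq_or_ne j i with rfl | hne
  · exact Set.mem_insert _ _
  · exact Set.mem_insert_of_mem _ (by simpa [Function.update_of_ne hne] using hj)

lemma apply_eq_of_mem_hardThr {s : ℕ} {u w : Fin m → ℝ} (hu : u ∈ hardThr s w) {i : Fin m}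
    (hi : zeroNorm (Function.update u i (w i)) ≤ s) : u i = w i := by
  have hle := Real.sqrt_le_sqrt_iff (sum_nonneg fun j _ => sq_nonneg _) |>.1 (hu.2 _ hi)
  have hrest : ∑ j ∈ {i}ᶜ, (Function.update u i (w i) - w) j ^ 2 = ∑ j ∈ {i}ᶜ, (u - w) j ^ 2 :=
    sum_congr rfl fun j hj => by
      rw [Pi.sub_apply, Function.update_of_ne (by simpa using hj), Pi.sub_apply]
  rw [Fintype.sum_eq_add_sum_compl i, Fintype.sum_eq_add_sum_compl i, hrest] at hle
  simp only [Pi.sub_apply, Function.update_self, sub_self] at hle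
  nlinarith [sq_nonneg (u i - w i)]

lemma support_eq_of_subset_of_zeroNorm_le {a b : Fin m → ℝ}
    (hsub : Function.support a ⊆ Function.support b) (hb : zeroNorm b ≤ zeroNorm a) :
    Function.support b = Function.support a :=
  (Set.eq_of_subset_of_ncard_le hsub hb (Set.toFinite _)).symm

lemma eq_zero_of_mem_hardThr_sub_smul {s : ℕ} {η : ℝ} (hη : η ≠ 0) {u g : Fin m → ℝ}
    (hu : u ∈ hardThr s (u - η • g)) {i : Fin m} (hi : u i ≠ 0 ∨ zeroNorm u < s) : g i = 0 := by
  have hupd : zeroNorm (Function.update u i ((u - η • g) i)) ≤ s := by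
    rcases hi with hi | hi
    · exact (zeroNorm_update_le_of_ne_zero hi _).trans hu.1
    · exact (zeroNorm_update_le_succ u i _).trans hi
  have := apply_eq_of_mem_hardThr hu hupd
  simp only [Pi.sub_apply, Pi.smul_apply, smul_eq_mul] at this
  exact (mul_eq_zero.1 (by linarith)).resolve_left hη

section Convexity

/-- The gradient inequality of the convex `C¹` function `hLoss c C`, whose derivative at `u` is
`(E(α))ᵢᵢ · u` for `u = αᵢ`. -/
lemma mul_sub_le_hLoss_sub {c C : ℝ} (hc : 0 ≤ c) (hC : 0 ≤ C) (t u : ℝ) :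
    (if 0 ≤ u then 1 / C else 1 / c) * u * (t - u) ≤ hLoss c C t - hLoss c C u := by
  have hdiv : ∀ k t : ℝ, t ^ 2 / (2 * k) = 1 / k * t ^ 2 / 2 := fun _ _ => by ring
  have hp : 0 ≤ 1 / C := by positivity
  have hq : 0 ≤ 1 / c := by positivity
  simp only [hLoss, hdiv]
  generalize 1 / C = p at *
  generalize 1 / c = q at *
  split_ifs with hu ht ht
  · nlinarith [mul_nonneg hp (sq_nonneg (t - u))]
  · nlinarith [mul_nonneg hp (mul_nonneg hu (neg_nonneg.2 (not_le.1 ht).le)),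
      mul_nonneg hq (sq_nonneg t), mul_nonneg hp (sq_nonneg u)]
  · nlinarith [mul_nonneg hq (mul_nonneg ht (neg_nonneg.2 (not_le.1 hu).le)),
      mul_nonneg hp (sq_nonneg t), mul_nonneg hq (sq_nonneg u)]
  · nlinarith [mul_nonneg hq (sq_nonneg (t - u))]

lemma sum_mulVec_sq_add_le (A : Matrix (Fin n) (Fin m) ℝ) (a b : Fin m → ℝ) :
    (1 / 2) * ∑ i, (A *ᵥ a) i ^ 2 + ∑ j, ((Aᵀ * A) *ᵥ a) j * (b j - a j)
      ≤ (1 / 2) * ∑ i, (A *ᵥ b) i ^ 2 := by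
  have hcross : ∑ j, ((Aᵀ * A) *ᵥ a) j * (b j - a j) = ∑ i, (A *ᵥ a) i * (A *ᵥ (b - a)) i := by
    change (Aᵀ * A) *ᵥ a ⬝ᵥ (b - a) = A *ᵥ a ⬝ᵥ A *ᵥ (b - a)
    rw [← mulVec_mulVec, mulVec_transpose, ← dotProduct_mulVec]
  have hb : A *ᵥ b = A *ᵥ a + A *ᵥ (b - a) := by rw [← mulVec_add, add_sub_cancel]
  rw [hcross, hb, mul_sum, mul_sum, ← sum_add_distrib]
  exact sum_le_sum fun i _ => by
    simp only [Pi.add_apply]; nlinarith [sq_nonneg ((A *ᵥ (b - a)) i)]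

variable (c C : ℝ) (x : Fin m → Fin n → ℝ) (y : Fin m → ℝ)

lemma Emat_mulVec_apply (α : Fin m → ℝ) (i : Fin m) :
    (Emat c C α *ᵥ α) i = (if 0 ≤ α i then 1 / C else 1 / c) * α i := by
  simp [Emat, mulVec_diagonal]

lemma Dfun_eq (α : Fin m → ℝ) :
    Dfun c C x y α = (1 / 2) * ∑ i, (Qmat x y *ᵥ α) i ^ 2 + ∑ i, hLoss c C (α i) - ∑ i, α i := by
  have hsep : (1 / 2) * ∑ i, (Emat c C α *ᵥ α) i * α i = ∑ i, hLoss c C (α i) := by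
    rw [mul_sum]
    exact sum_congr rfl fun i _ => by rw [Emat_mulVec_apply, hLoss]; split_ifs <;> ring
  rw [Dfun, hsep]

lemma sum_gfun_mul (α d : Fin m → ℝ) (b : ℝ) :
    ∑ i, gfun c C x y α b i * d i = ∑ i, (((Qmat x y)ᵀ * Qmat x y) *ᵥ α) i * d i
      + ∑ i, (if 0 ≤ α i then 1 / C else 1 / c) * α i * d i - ∑ i, d i + b * ∑ i, y i * d i := by
  simp only [gfun, Hmat, add_mulVec, Pi.add_apply, Pi.sub_apply, Pi.smul_apply, smul_eq_mul,
    Emat_mulVec_apply, add_mul, sub_mul, sum_add_distrib, sum_sub_distrib, mul_sum, one_mul, mul_assoc]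

lemma Dfun_add_sum_gfun_mul_le {c C : ℝ} (hc : 0 ≤ c) (hC : 0 ≤ C) {α β : Fin m → ℝ} (b : ℝ)
    (hy : ∑ i, α i * y i = ∑ i, β i * y i) :
    Dfun c C x y β + ∑ i, gfun c C x y β b i * (α i - β i) ≤ Dfun c C x y α := by
  have hyd : ∑ i, y i * (α i - β i) = 0 := by
    rw [← sub_eq_zero.2 hy, ← sum_sub_distrib]
    exact sum_congr rfl fun i _ => by ring
  have hquad := sum_mulVec_sq_add_le (Qmat x y) β α
  have hsep : ∑ i, (if 0 ≤ β i then 1 / C else 1 / c) * β i * (α i - β i)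
      ≤ ∑ i, hLoss c C (α i) - ∑ i, hLoss c C (β i) := by
    rw [← sum_sub_distrib]; exact sum_le_sum fun i _ => mul_sub_le_hLoss_sub hc hC _ _
  rw [Dfun_eq, Dfun_eq, sum_gfun_mul, hyd, sum_sub_distrib]
  linarith

end Convexity

end

theorem stmt_8_general {m n : ℕ} (c C : ℝ) (hc : 0 < c) (hcC : c < C)
    (x : Fin m → Fin n → ℝ) (y : Fin m → ℝ)
    (s : ℕ) (η : ℝ) (hη : 0 < η)
    (αstar : Fin m → ℝ) (bstar : ℝ)
    (hst : etaStat c C x y s η αstar bstar) :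
    feasible y s αstar ∧
      ∃ ε > (0 : ℝ), ∀ α : Fin m → ℝ, feasible y s α → _root_.enorm (α - αstar) < ε →
        Dfun c C x y αstar ≤ Dfun c C x y α := by
  obtain ⟨hproj, hsum⟩ := hst
  obtain ⟨ε, hε, hsupp⟩ := exists_pos_support_subset_of_enorm_sub_lt αstar
  refine ⟨⟨hsum, hproj.1⟩, ε, hε, fun α hα hdist => ?_⟩
  have horth : ∑ i, gfun c C x y αstar bstar i * (α i - αstar i) = 0 := by
    refine sum_eq_zero fun i _ => ?_
    by_cases hi : αstar i ≠ 0 ∨ zeroNorm αstar < s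
    · rw [eq_zero_of_mem_hardThr_sub_smul hη.ne' hproj hi, zero_mul]
    · rw [not_or, not_not, not_lt] at hi
      have hsame := support_eq_of_subset_of_zeroNorm_le (hsupp α hdist) (hα.2.trans hi.2)
      have hαi : α i = 0 := Function.notMem_support.1 (hsame ▸ Function.notMem_support.2 hi.1)
      rw [hαi, hi.1, sub_zero, mul_zero]
  linarith [Dfun_add_sum_gfun_mul_le x y hc.le (hc.trans hcC).le bstar (hα.1.trans hsum.symm)]

/-- an η-stationary point is a local minimizer of (SSVM). -/
theorem stmt_8 {m n : ℕ} (hm : 1 ≤ m) (hn : 1 ≤ n) (c C : ℝ) (hc : 0 < c) (hcC : c < C)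
    (x : Fin m → Fin n → ℝ) (y : Fin m → ℝ) (hy : ∀ i, y i = 1 ∨ y i = -1)
    (s : ℕ) (hs1 : 1 ≤ s) (hs2 : s ≤ m) (η : ℝ) (hη : 0 < η)
    (αstar : Fin m → ℝ) (bstar : ℝ)
    (hst : etaStat c C x y s η αstar bstar) :
    feasible y s αstar ∧
      ∃ ε > (0 : ℝ), ∀ α : Fin m → ℝ, feasible y s α → _root_.enorm (α - αstar) < ε →
        Dfun c C x y αstar ≤ Dfun c C x y α :=
  stmt_8_general c C hc hcC x y s η hη αstar bstar hst
end
end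

section
/- (Theorem 4 c.) If (α*, b*) is an η-stationary point of (SSVM) for some η > 0 and ‖α*‖₀ < s, then α* is the unique global minimizer of (SSVM): D(α*) ≤ D(α) for every feasible α, and any feasible α with D(α) = D(α*) equals α*. -/
noncomputable section

open Finset Matrix

/-
A best `s`-sparse approximation of a vector with fewer than `s` nonzero entries must coincide
with it: otherwise changing one more entry gives a strictly closer `s`-sparse vector. Hence
`α* = α* - η g(α*, b*)`, i.e. `g(α*, b*) = 0`.

The term `½⟨E(α)α, α⟩ = ∑ h_{cC}(α_i)` is a sum of piecewise quadratics of curvature at least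
`1/C`, and `½‖Qα‖²` is convex, so
`D(α) ≥ D(α*) + ⟨H(α*)α* - 1, α - α*⟩ + ‖α - α*‖² / (2C)`.
When `g(α*, b*) = 0` the linear term is `-b*⟨y, α - α*⟩`, which vanishes on the hyperplane
`⟨α, y⟩ = 0`; so `α*` is a strict global minimiser there.
-/

lemma zeroNorm_update_le {m : ℕ} (u : Fin m → ℝ) (i : Fin m) (a : ℝ) :
    zeroNorm (Function.update u i a) ≤ zeroNorm u + 1 := by
  unfold zeroNorm
  calc {j | Function.update u i a j ≠ 0}.ncard ≤ (insert i {j | u j ≠ 0}).ncard := by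
        refine Set.ncard_le_ncard (fun j hj => ?_) (Set.toFinite _)
        rcases eq_or_ne j i with rfl | hji
        · exact Set.mem_insert _ _
        · exact Set.mem_insert_of_mem _ (by simpa [Function.update_of_ne hji] using hj)
    _ ≤ {j | u j ≠ 0}.ncard + 1 := Set.ncard_insert_le _ _

lemma enorm_update_zero_lt {m : ℕ} {w : Fin m → ℝ} {i : Fin m} (hi : w i ≠ 0) :
    _root_.enorm (Function.update w i 0) < _root_.enorm w := by
  unfold _root_.enorm
  refine Real.sqrt_lt_sqrt (sum_nonneg fun j _ => sq_nonneg _) ?_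
  refine sum_lt_sum (fun j _ => ?_) ⟨i, mem_univ i, by simpa using pow_pos (abs_pos.2 hi) 2⟩
  rcases eq_or_ne j i with rfl | hji
  · simpa using sq_nonneg (w j)
  · rw [Function.update_of_ne hji]

lemma eq_of_mem_hardThr_of_zeroNorm_lt {m s : ℕ} {u β : Fin m → ℝ} (hu : u ∈ hardThr s β)
    (hs : zeroNorm u < s) : u = β := by
  by_contra hne
  obtain ⟨i, hi⟩ := Function.ne_iff.1 hne
  have hle := hu.2 (Function.update u i (β i)) ((zeroNorm_update_le u i _).trans hs)
  have hdiff : Function.update u i (β i) - β = Function.update (u - β) i 0 := by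
    ext j
    rcases eq_or_ne j i with rfl | hji <;> simp [*]
  rw [hdiff] at hle
  exact hle.not_gt (enorm_update_zero_lt (sub_ne_zero.2 hi))

lemma gfun_eq_zero_of_etaStat {m n s : ℕ} {c C η b : ℝ} {x : Fin m → Fin n → ℝ}
    {y α : Fin m → ℝ} (hη : 0 < η) (hst : etaStat c C x y s η α b) (hs : zeroNorm α < s) :
    gfun c C x y α b = 0 := by
  have hfix := eq_of_mem_hardThr_of_zeroNorm_lt hst.1 hs
  have hsmul : η • gfun c C x y α b = 0 := sub_eq_self.1 hfix.symm
  exact (smul_eq_zero.1 hsmul).resolve_left hη.ne'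

lemma ite_mul_sq_tangent_le {a b u t : ℝ} (hab : a ≤ b) :
    (if 0 ≤ u then a else b) * u * u + 2 * ((if 0 ≤ u then a else b) * u * (t - u))
      + a * (t - u) ^ 2 ≤ (if 0 ≤ t then a else b) * t * t := by
  by_cases hu : 0 ≤ u <;> by_cases ht : 0 ≤ t <;> simp only [hu, ht, if_true, if_false]
  · nlinarith
  · nlinarith [mul_nonneg (sub_nonneg.2 hab) (sq_nonneg t)]
  · nlinarith [mul_nonneg (mul_nonneg (sub_nonneg.2 hab) (neg_nonneg.2 (not_le.1 hu).le))
      (by linarith : 0 ≤ 2 * t - u)]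
  · nlinarith [mul_nonneg (sub_nonneg.2 hab) (sq_nonneg (t - u))]

lemma Emat_mulVec_dotProduct_ge {m : ℕ} {c C : ℝ} (hc : 0 < c) (hcC : c ≤ C)
    (α β : Fin m → ℝ) :
    Emat c C β *ᵥ β ⬝ᵥ β + 2 * (Emat c C β *ᵥ β ⬝ᵥ (α - β)) + 1 / C * ∑ i, (α i - β i) ^ 2
      ≤ Emat c C α *ᵥ α ⬝ᵥ α := by
  simp only [Emat, mulVec_diagonal, dotProduct, mul_sum, Pi.sub_apply, ← sum_add_distrib]
  exact sum_le_sum fun i _ => ite_mul_sq_tangent_le (one_div_le_one_div_of_le hc hcC)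

lemma sum_sq_mulVec_ge {ι κ : Type*} [Fintype ι] [Fintype κ] (Q : Matrix κ ι ℝ)
    (α β : ι → ℝ) :
    ∑ i, (Q *ᵥ β) i ^ 2 + 2 * ((Qᵀ * Q) *ᵥ β ⬝ᵥ (α - β)) ≤ ∑ i, (Q *ᵥ α) i ^ 2 := by
  have hcross : (Qᵀ * Q) *ᵥ β ⬝ᵥ (α - β) = Q *ᵥ β ⬝ᵥ Q *ᵥ (α - β) := by
    rw [dotProduct_mulVec, ← mulVec_transpose, mulVec_mulVec]
  have hα : Q *ᵥ α = Q *ᵥ β + Q *ᵥ (α - β) := by rw [← mulVec_add, add_sub_cancel]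
  rw [hcross, hα]
  simp only [dotProduct, Pi.add_apply, mul_sum, ← sum_add_distrib]
  exact sum_le_sum fun i _ => by nlinarith [sq_nonneg ((Q *ᵥ (α - β)) i)]

lemma Dfun_add_le {m n : ℕ} {c C : ℝ} (hc : 0 < c) (hcC : c ≤ C) (x : Fin m → Fin n → ℝ)
    (y α β : Fin m → ℝ) :
    Dfun c C x y β + (Hmat c C x y β *ᵥ β - fun _ => 1) ⬝ᵥ (α - β)
        + 1 / (2 * C) * ∑ i, (α i - β i) ^ 2 ≤ Dfun c C x y α := by
  have hQ := sum_sq_mulVec_ge (Qmat x y) α β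
  have hE := Emat_mulVec_dotProduct_ge hc hcC α β
  have hlin : (fun _ => (1 : ℝ)) ⬝ᵥ (α - β) = ∑ i, α i - ∑ i, β i := by
    simp [dotProduct, sum_sub_distrib]
  rw [Hmat, add_mulVec, sub_dotProduct, add_dotProduct, hlin]
  rw [show 1 / (2 * C) = 1 / 2 * (1 / C) by ring]
  unfold Dfun
  -- `Dfun` spells the `E`-term as a sum, which is this dot product by definition
  change _ + 1 / 2 * (Emat c C β *ᵥ β ⬝ᵥ β) - _ + _ + _ ≤ _ + 1 / 2 * (Emat c C α *ᵥ α ⬝ᵥ α) - _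
  linarith

lemma Dfun_add_le_of_gfun_eq_zero {m n : ℕ} {c C b : ℝ} (hc : 0 < c) (hcC : c ≤ C)
    {x : Fin m → Fin n → ℝ} {y α β : Fin m → ℝ} (hg : gfun c C x y β b = 0)
    (hα : ∑ i, α i * y i = ∑ i, β i * y i) :
    Dfun c C x y β + 1 / (2 * C) * ∑ i, (α i - β i) ^ 2 ≤ Dfun c C x y α := by
  have hgrad : Hmat c C x y β *ᵥ β - (fun _ => 1) = -(b • y) := eq_neg_of_add_eq_zero_left hg
  have hαy : α ⬝ᵥ y = β ⬝ᵥ y := hα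
  have horth : -(b • y) ⬝ᵥ (α - β) = 0 := by
    rw [neg_dotProduct, smul_dotProduct, dotProduct_sub, dotProduct_comm y α,
      dotProduct_comm y β, hαy, sub_self, smul_zero, neg_zero]
  simpa [hgrad, horth] using Dfun_add_le hc hcC x y α β

theorem stmt_11_general {m n : ℕ} (c C : ℝ) (hc : 0 < c) (hcC : c < C)
    (x : Fin m → Fin n → ℝ) (y : Fin m → ℝ)
    (s : ℕ) (η : ℝ) (hη : 0 < η)
    (αstar : Fin m → ℝ) (bstar : ℝ)
    (hst : etaStat c C x y s η αstar bstar) (hz : zeroNorm αstar < s) :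
    (∀ α : Fin m → ℝ, feasible y s α → Dfun c C x y αstar ≤ Dfun c C x y α) ∧
      (∀ α : Fin m → ℝ, feasible y s α → Dfun c C x y α = Dfun c C x y αstar → α = αstar) := by
  have hg := gfun_eq_zero_of_etaStat hη hst hz
  have hgap (α : Fin m → ℝ) (hα : feasible y s α) :=
    Dfun_add_le_of_gfun_eq_zero hc hcC.le hg (hα.1.trans hst.2.symm)
  have hCpos : 0 < 1 / (2 * C) := by have := hc.trans hcC; positivity
  have hsq (α : Fin m → ℝ) : 0 ≤ ∑ i, (α i - αstar i) ^ 2 :=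
    sum_nonneg fun i _ => sq_nonneg _
  refine ⟨fun α hα => ?_, fun α hα hD => ?_⟩
  · nlinarith [hgap α hα, hsq α]
  · have hzero : ∑ i, (α i - αstar i) ^ 2 = 0 := by nlinarith [hgap α hα, hsq α]
    funext i
    have hi := (sum_eq_zero_iff_of_nonneg fun j _ => sq_nonneg (α j - αstar j)).1 hzero i
      (mem_univ i)
    exact sub_eq_zero.1 (pow_eq_zero_iff two_ne_zero |>.1 hi)

/-- an η-stationary point with ‖α*‖₀ < s is the unique global minimizer. -/
theorem stmt_11 {m n : ℕ} (hm : 1 ≤ m) (hn : 1 ≤ n) (c C : ℝ) (hc : 0 < c) (hcC : c < C)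
    (x : Fin m → Fin n → ℝ) (y : Fin m → ℝ) (hy : ∀ i, y i = 1 ∨ y i = -1)
    (s : ℕ) (hs1 : 1 ≤ s) (hs2 : s ≤ m) (η : ℝ) (hη : 0 < η)
    (αstar : Fin m → ℝ) (bstar : ℝ)
    (hst : etaStat c C x y s η αstar bstar) (hz : zeroNorm αstar < s) :
    (∀ α : Fin m → ℝ, feasible y s α → Dfun c C x y αstar ≤ Dfun c C x y α) ∧
      (∀ α : Fin m → ℝ, feasible y s α → Dfun c C x y α = Dfun c C x y αstar → α = αstar) :=
  stmt_11_general c C hc hcC x y s η hη αstar bstar hst hz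
end
end

section
/- (Lemma 2 b.) Let (α*, b*) be an η-stationary point of (SSVM) with η > 0, and assume either ‖α*‖₀ < s, or ‖α*‖₀ = s together with η·max_i |g_i(α*, b*)| < ‖α*‖_[s]. Then there exists δ* > 0 such that for every (α, b) ∈ ℝ^m × ℝ with ‖(α,b) − (α*,b*)‖ < δ* and ‖α‖₀ ≤ s, and for every T ∈ T_s(α − η·g(α, b)), the following hold: g_i(α*, b*) = 0 for all i ∈ T, α*_j = 0 for all j ∉ T, and Σ_{i∈T} α*_i y_i = 0. -/
/-!
Stationarity says that `α*` is a best `s`-sparse approximation of `v* = α* - η g(α*, b*)`.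
Comparing it with the truncation of `v*` to any `s`-set `S` containing its support shows
`v* = α*` on `S`, i.e. `g` vanishes on `S`; if `‖α*‖₀ < s`, every index lies in such an `S`, so
`g ≡ 0`. Off the support `v*` is therefore `0` or bounded by `η max |gᵢ| < ‖α*‖_[s]`: the support
is strictly separated in magnitude from its complement. Strict separation is an open condition
and `α - η g(α, b)` is continuous in `(α, b)` (the kink of `E(α)α` is continuous), so near
`(α*, b*)` every `T ∈ T_s(α - η g(α, b))` contains the support, hence is such an `S`.
-/
noncomputable section

open Finset Matrix

def supportFinset {m : ℕ} (α : Fin m → ℝ) : Finset (Fin m) := {i | α i ≠ 0}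

@[simp]
lemma mem_supportFinset {m : ℕ} {α : Fin m → ℝ} {i : Fin m} : i ∈ supportFinset α ↔ α i ≠ 0 := by
  simp [supportFinset]

lemma zeroNorm_eq_card_supportFinset {m : ℕ} (α : Fin m → ℝ) :
    zeroNorm α = (supportFinset α).card := by
  rw [zeroNorm, ← Set.ncard_coe_finset]
  congr 1
  ext i
  simp

lemma zeroNorm_le_card_of_subset {m : ℕ} {α : Fin m → ℝ} {S : Finset (Fin m)}
    (h : ∀ i ∉ S, α i = 0) : zeroNorm α ≤ S.card := by
  rw [zeroNorm_eq_card_supportFinset]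
  exact Finset.card_le_card fun i hi => by_contra fun hiS => mem_supportFinset.1 hi (h i hiS)

lemma enorm_le_enorm_iff {m : ℕ} {v w : Fin m → ℝ} :
    _root_.enorm v ≤ _root_.enorm w ↔ ∑ i, v i ^ 2 ≤ ∑ i, w i ^ 2 :=
  Real.sqrt_le_sqrt_iff (Finset.sum_nonneg fun i _ => sq_nonneg (w i))

/-- Compare `u` with the truncation of `v` to `S`, which is also `s`-sparse. -/
lemma eq_of_mem_hardThr {m s : ℕ} {u v : Fin m → ℝ} (hu : u ∈ hardThr s v)
    {S : Finset (Fin m)} (hsupp : supportFinset u ⊆ S) (hS : S.card ≤ s) :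
    ∀ i ∈ S, u i = v i := by
  classical
  have hu_out : ∀ i ∉ S, u i = 0 := fun i hi =>
    by_contra fun h => hi (hsupp (mem_supportFinset.2 h))
  set w : Fin m → ℝ := fun i => if i ∈ S then v i else 0
  have hw : zeroNorm w ≤ s :=
    (zeroNorm_le_card_of_subset fun i hi => if_neg hi).trans hS
  have hterm : ∀ i, (u i - v i) ^ 2 - (w i - v i) ^ 2 = if i ∈ S then (u i - v i) ^ 2 else 0 := by
    intro i
    by_cases hi : i ∈ S <;> simp [w, hi, hu_out]
  have hle : ∑ i, (if i ∈ S then (u i - v i) ^ 2 else 0) ≤ 0 := by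
    have := enorm_le_enorm_iff.1 (hu.2 w hw)
    simp only [Pi.sub_apply] at this
    simp only [← hterm, Finset.sum_sub_distrib]
    linarith
  have hnonneg : ∀ i ∈ Finset.univ, 0 ≤ if i ∈ S then (u i - v i) ^ 2 else 0 :=
    fun i _ => by positivity
  intro i hi
  have := (Finset.sum_eq_zero_iff_of_nonneg hnonneg).1 (le_antisymm hle (Finset.sum_nonneg hnonneg))
    i (Finset.mem_univ i)
  rw [if_pos hi, sq_eq_zero_iff, sub_eq_zero] at this
  exact this

lemma subset_of_mem_Tsets {m s : ℕ} {w : Fin m → ℝ} {S T : Finset (Fin m)}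
    (hsep : ∀ i ∈ S, ∀ j ∉ S, |w j| < |w i|) (hS : S.card ≤ s) (hT : T ∈ Tsets s w) :
    S ⊆ T := by
  intro i hi
  by_contra hiT
  obtain ⟨j, hjT, hjS⟩ : ∃ j ∈ T, j ∉ S := by
    by_contra! h
    have hTs := hT.1
    have : T.card < S.card :=
      Finset.card_lt_card ⟨h, fun hST => hiT (hST hi)⟩
    omega
  exact (hsep i hi j hjS).not_ge (hT.2 j hjT i hiT)

lemma isOpen_setOf_separated {m : ℕ} (S : Finset (Fin m)) :
    IsOpen {w : Fin m → ℝ | ∀ i ∈ S, ∀ j ∉ S, |w j| < |w i|} := by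
  simp only [Set.ofPred_forall]
  refine isOpen_iInter_of_finite fun i => isOpen_iInter_of_finite fun _ =>
    isOpen_iInter_of_finite fun j => isOpen_iInter_of_finite fun _ => ?_
  exact isOpen_lt (by fun_prop) (by fun_prop)

lemma sthLargest_le_abs {m s : ℕ} {α : Fin m → ℝ} (hα : zeroNorm α ≤ s) {i : Fin m}
    (hi : α i ≠ 0) : sthLargest s α ≤ |α i| := by
  refine Real.sSup_le (fun t ht => ?_) (abs_nonneg _)
  by_contra! hlt
  have hsub : {k | t ≤ |α k|} ⊆ ↑((supportFinset α).erase i) := by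
    intro k hk
    have hk : t ≤ |α k| := hk
    simp only [Finset.coe_erase, Set.mem_sdiff, Finset.mem_coe, mem_supportFinset,
      Set.mem_singleton_iff]
    refine ⟨fun h0 => ?_, fun hki => ?_⟩
    · rw [h0, abs_zero] at hk
      linarith [abs_nonneg (α i)]
    · subst hki
      linarith
  have hcard := Set.ncard_le_ncard hsub (Finset.finite_toSet _)
  rw [Set.ncard_coe_finset, Finset.card_erase_of_mem (mem_supportFinset.2 hi),
    ← zeroNorm_eq_card_supportFinset] at hcard
  have hpos : 0 < zeroNorm α := by
    rw [zeroNorm_eq_card_supportFinset]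
    exact Finset.card_pos.2 ⟨i, mem_supportFinset.2 hi⟩
  have : s ≤ {k | t ≤ |α k|}.ncard := ht
  omega

lemma dist_le_pairDist {m : ℕ} (α α' : Fin m → ℝ) (b b' : ℝ) :
    dist (α, b) (α', b') ≤ pairDist α b α' b' := by
  have hsum : 0 ≤ ∑ i, (α i - α' i) ^ 2 := Finset.sum_nonneg fun i _ => sq_nonneg _
  rw [Prod.dist_eq, max_le_iff, pairDist, dist_pi_le_iff (Real.sqrt_nonneg _)]
  refine ⟨fun i => Real.abs_le_sqrt ?_, Real.abs_le_sqrt (by linarith)⟩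
  have := Finset.single_le_sum (fun k _ => sq_nonneg (α k - α' k)) (Finset.mem_univ i)
  nlinarith [sq_nonneg (b - b')]

section SSVM

variable {m n : ℕ} {c C : ℝ} {x : Fin m → Fin n → ℝ} {y : Fin m → ℝ} {s : ℕ} {η : ℝ}

lemma gfun_eq (c C : ℝ) (x : Fin m → Fin n → ℝ) (y : Fin m → ℝ) (α : Fin m → ℝ) (b : ℝ) :
    gfun c C x y α b = ((Qmat x y)ᵀ * Qmat x y) *ᵥ α
      + (fun i => max (α i) 0 / C + min (α i) 0 / c) - (fun _ => 1) + b • y := by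
  ext i
  rcases le_or_gt 0 (α i) with h | h
  · simp [gfun, Hmat, Emat, Matrix.add_mulVec, Matrix.mulVec_diagonal, h, div_eq_inv_mul]
  · simp [gfun, Hmat, Emat, Matrix.add_mulVec, Matrix.mulVec_diagonal, h.not_ge, h.le,
      div_eq_inv_mul]

lemma continuous_gfun (c C : ℝ) (x : Fin m → Fin n → ℝ) (y : Fin m → ℝ) :
    Continuous fun p : (Fin m → ℝ) × ℝ => gfun c C x y p.1 p.2 := by
  simp only [gfun_eq]
  fun_prop

namespace etaStat

variable {α : Fin m → ℝ} {b : ℝ}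

lemma card_supportFinset_le (hst : etaStat c C x y s η α b) : (supportFinset α).card ≤ s :=
  (zeroNorm_eq_card_supportFinset α).symm.trans_le hst.1.1

lemma gfun_eq_zero_of_mem (hst : etaStat c C x y s η α b) (hη : η ≠ 0) {S : Finset (Fin m)}
    (hsupp : supportFinset α ⊆ S) (hS : S.card ≤ s) {i : Fin m} (hi : i ∈ S) :
    gfun c C x y α b i = 0 := by
  have := eq_of_mem_hardThr hst.1 hsupp hS i hi
  simp only [Pi.sub_apply, Pi.smul_apply, smul_eq_mul] at this
  exact (mul_eq_zero.1 (by linarith : η * gfun c C x y α b i = 0)).resolve_left hη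

lemma gfun_eq_zero_of_zeroNorm_lt (hst : etaStat c C x y s η α b) (hη : η ≠ 0)
    (hlt : zeroNorm α < s) (i : Fin m) : gfun c C x y α b i = 0 := by
  classical
  refine hst.gfun_eq_zero_of_mem hη (Finset.subset_insert i _) ?_ (Finset.mem_insert_self i _)
  rw [zeroNorm_eq_card_supportFinset] at hlt
  exact (Finset.card_insert_le _ _).trans hlt

lemma abs_sub_smul_gfun_lt (hst : etaStat c C x y s η α b) (hη : 0 < η)
    (hcase : zeroNorm α < s ∨
      (zeroNorm α = s ∧ η * (⨆ i, |gfun c C x y α b i|) < sthLargest s α)) :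
    ∀ i ∈ supportFinset α, ∀ j ∉ supportFinset α,
      |(α - η • gfun c C x y α b) j| < |(α - η • gfun c C x y α b) i| := by
  intro i hi j hj
  have hαj : α j = 0 := by simpa using hj
  have hgi := hst.gfun_eq_zero_of_mem hη.ne' subset_rfl hst.card_supportFinset_le hi
  simp only [Pi.sub_apply, Pi.smul_apply, smul_eq_mul, hgi, hαj, mul_zero, sub_zero, zero_sub,
    abs_neg, abs_mul, abs_of_pos hη]
  rcases hcase with hlt | ⟨-, hgap⟩
  · rw [hst.gfun_eq_zero_of_zeroNorm_lt hη.ne' hlt j, abs_zero, mul_zero]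
    exact abs_pos.2 (mem_supportFinset.1 hi)
  · calc η * |gfun c C x y α b j| ≤ η * ⨆ k, |gfun c C x y α b k| :=
          mul_le_mul_of_nonneg_left (le_ciSup (f := fun k => |gfun c C x y α b k|)
            (Set.finite_range _).bddAbove j) hη.le
      _ < sthLargest s α := hgap
      _ ≤ |α i| := sthLargest_le_abs hst.1.1 (mem_supportFinset.1 hi)

end etaStat

end SSVM

theorem stmt_18_general {m n : ℕ} (c C : ℝ)
    (x : Fin m → Fin n → ℝ) (y : Fin m → ℝ)
    (s : ℕ) (η : ℝ) (hη : 0 < η)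
    (αstar : Fin m → ℝ) (bstar : ℝ)
    (hst : etaStat c C x y s η αstar bstar)
    (hcase : zeroNorm αstar < s ∨
      (zeroNorm αstar = s ∧
        η * (⨆ i, |gfun c C x y αstar bstar i|) < sthLargest s αstar)) :
    ∃ δ > (0 : ℝ), ∀ (α : Fin m → ℝ) (b : ℝ), pairDist α b αstar bstar < δ →
      zeroNorm α ≤ s →
      ∀ T ∈ Tsets s (α - η • gfun c C x y α b),
        (∀ i ∈ T, gfun c C x y αstar bstar i = 0) ∧
        (∀ j ∉ T, αstar j = 0) ∧
        (∑ i ∈ T, αstar i * y i = 0) := by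
  set S := supportFinset αstar
  have hcont : Continuous fun p : (Fin m → ℝ) × ℝ => p.1 - η • gfun c C x y p.1 p.2 :=
    continuous_fst.sub ((continuous_gfun c C x y).const_smul η)
  obtain ⟨δ, hδ, hball⟩ := Metric.isOpen_iff.1 ((isOpen_setOf_separated S).preimage hcont)
    (αstar, bstar) (hst.abs_sub_smul_gfun_lt hη hcase)
  refine ⟨δ, hδ, fun α b hd _ T hT => ?_⟩
  have hST : S ⊆ T :=
    subset_of_mem_Tsets (hball ((dist_le_pairDist α αstar b bstar).trans_lt hd))
      hst.card_supportFinset_le hT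
  have hout : ∀ j ∉ T, αstar j = 0 := fun j hj =>
    by_contra fun h => hj (hST (mem_supportFinset.2 h))
  refine ⟨fun i hi => hst.gfun_eq_zero_of_mem hη.ne' hST hT.1.le hi, hout, ?_⟩
  rw [Finset.sum_subset (Finset.subset_univ T) fun j _ hj => by rw [hout j hj, zero_mul]]
  exact hst.2

/-- Lemma 2 b: the stationary equations hold at (α*, b*) for every index set
T ∈ T_s(α − η·g(α,b)) with (α,b) near (α*,b*). -/
theorem stmt_18 {m n : ℕ} (hm : 1 ≤ m) (hn : 1 ≤ n) (c C : ℝ) (hc : 0 < c) (hcC : c < C)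
    (x : Fin m → Fin n → ℝ) (y : Fin m → ℝ) (hy : ∀ i, y i = 1 ∨ y i = -1)
    (s : ℕ) (hs1 : 1 ≤ s) (hs2 : s ≤ m) (η : ℝ) (hη : 0 < η)
    (αstar : Fin m → ℝ) (bstar : ℝ)
    (hst : etaStat c C x y s η αstar bstar)
    (hcase : zeroNorm αstar < s ∨
      (zeroNorm αstar = s ∧
        η * (⨆ i, |gfun c C x y αstar bstar i|) < sthLargest s αstar)) :
    ∃ δ > (0 : ℝ), ∀ (α : Fin m → ℝ) (b : ℝ), pairDist α b αstar bstar < δ →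
      zeroNorm α ≤ s →
      ∀ T ∈ Tsets s (α - η • gfun c C x y α b),
        (∀ i ∈ T, gfun c C x y αstar bstar i = 0) ∧
        (∀ j ∉ T, αstar j = 0) ∧
        (∑ i ∈ T, αstar i * y i = 0) :=
  stmt_18_general c C x y s η hη αstar bstar hst hcase
end
end
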